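/- Let F be a group, let G be a finite irreducible F-group, and let m be a positive integer. The map from Hom_F(G^m, G) to Hom_F(G, G)^m sending an F-group morphism φ : G^m → G to the m-tuple of its restrictions to the m factors (each factor embedded in G^m with identity entries in the other coordinates) is injective. If G is abelian, this map is a bijection. If G is non-abelian, its image is exactly the set of m-tuples in Hom_F(G, G)^m in which at most one coordinate differs from the trivial morphism. Moreover, every element of Hom_F(G^m, G) other than the trivial morphism is surjective. -/

import Mathlib

section FGroupDefs

variable (F : Type*) [Group F]

/-- A subgroup of an `F`-group is a *normal `F`-subgroup* if it is normal and
stable under the `F`-action. -/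
def IsNormalFSubgroup {G : Type*} [Group G] [MulDistribMulAction F G]
    (H : Subgroup G) : Prop :=
  H.Normal ∧ ∀ (f : F) (x : G), x ∈ H → f • x ∈ H

/-- An *irreducible `F`-group* is a nontrivial `F`-group whose only normal
`F`-subgroups are the trivial subgroup and the whole group. -/
def IsIrreducibleFGroup (G : Type*) [Group G] [MulDistribMulAction F G] : Prop :=
  Nontrivial G ∧ ∀ H : Subgroup G, IsNormalFSubgroup F H → H = ⊥ ∨ H = ⊤

/-- `[s]_F`: the smallest normal `F`-subgroup containing the set `s`. -/
def normalFClosure {G : Type*} [Group G] [MulDistribMulAction F G] (s : Set G) :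
    Subgroup G :=
  sInf {H : Subgroup G | IsNormalFSubgroup F H ∧ s ⊆ H}

/-- A group homomorphism is an `F`-group morphism if it commutes with the `F`-actions. -/
def IsFHom {G G' : Type*} [Group G] [Group G'] [MulDistribMulAction F G]
    [MulDistribMulAction F G'] (φ : G →* G') : Prop :=
  ∀ (f : F) (x : G), φ (f • x) = f • φ x

/-- `h_F(G)`: the number of `F`-group endomorphisms of `G`. -/
noncomputable def hF (G : Type*) [Group G] [MulDistribMulAction F G] : ℕ :=
  Nat.card {φ : G →* G // IsFHom F φ}

/-- Two `F`-groups are isomorphic if there is a bijective group homomorphism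
between them commuting with the `F`-actions. -/
def IsFIso (G G' : Type*) [Group G] [Group G'] [MulDistribMulAction F G]
    [MulDistribMulAction F G'] : Prop :=
  ∃ e : G ≃* G', ∀ (f : F) (x : G), e (f • x) = f • e x

end FGroupDefs

/-!
The kernel of an `F`-morphism out of an irreducible `F`-group is a normal `F`-subgroup, so every
`F`-morphism `G → G` is trivial or injective, hence (as `G` is finite) trivial or bijective.
A morphism `G^m → G` is determined by its restrictions to the factors, and conversely a tuple of
morphisms extends to `G^m` exactly when the images of distinct factors commute. This is automatic
when `G` is abelian; when it is not, two surjective restrictions would have commuting images `G`,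
so at most one restriction is nontrivial.
-/

section FGroupMorphisms

variable {F G H K : Type*} [Group F] [Group G] [Group H] [Group K]
  [MulDistribMulAction F G] [MulDistribMulAction F H] [MulDistribMulAction F K]

theorem IsFHom.comp {ψ : H →* K} {φ : G →* H} (hψ : IsFHom F ψ) (hφ : IsFHom F φ) :
    IsFHom F (ψ.comp φ) := fun f x => by
  rw [MonoidHom.comp_apply, hφ, hψ, MonoidHom.comp_apply]

theorem isFHom_mulSingle {ι : Type*} [DecidableEq ι] (i : ι) :
    IsFHom F (MonoidHom.mulSingle (fun _ : ι => G) i) := fun f x => by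
  funext j
  rcases eq_or_ne j i with rfl | hji
  · simp
  · simp [Pi.mulSingle_eq_of_ne hji]

theorem isFHom_of_comp_mulSingle {ι : Type*} [Finite ι] [DecidableEq ι] {φ : (ι → G) →* H}
    (h : ∀ i, IsFHom F (φ.comp (MonoidHom.mulSingle (fun _ : ι => G) i))) : IsFHom F φ := by
  intro f x
  have hcomm : φ.comp (MulDistribMulAction.toMonoidHom (ι → G) f) =
      (MulDistribMulAction.toMonoidHom H f).comp φ :=
    MonoidHom.pi_ext fun i y => by
      have hsingle := isFHom_mulSingle (F := F) (G := G) i f y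
      simp only [MonoidHom.mulSingle_apply] at hsingle
      simpa [← hsingle] using h i f y
  simpa using DFunLike.congr_fun hcomm x

theorem IsFHom.isNormalFSubgroup_ker {φ : G →* H} (hφ : IsFHom F φ) :
    IsNormalFSubgroup F φ.ker := by
  refine ⟨inferInstance, fun f x hx => ?_⟩
  rw [MonoidHom.mem_ker] at hx ⊢
  rw [hφ, hx, smul_one]

theorem IsIrreducibleFGroup.eq_one_or_injective (hirr : IsIrreducibleFGroup F G) {φ : G →* H}
    (hφ : IsFHom F φ) : φ = 1 ∨ Function.Injective φ := by
  rcases hirr.2 φ.ker hφ.isNormalFSubgroup_ker with hker | hker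
  · exact Or.inr ((MonoidHom.ker_eq_bot_iff φ).mp hker)
  · exact Or.inl (MonoidHom.ker_eq_top_iff.mp hker)

theorem IsIrreducibleFGroup.surjective_of_ne_one [Finite G] (hirr : IsIrreducibleFGroup F G)
    {φ : G →* G} (hφ : IsFHom F φ) (hne : φ ≠ 1) : Function.Surjective φ :=
  Finite.injective_iff_surjective.mp ((hirr.eq_one_or_injective hφ).resolve_left hne)

theorem exists_isFHom_comp_mulSingle_eq {ι : Type*} [Fintype ι] [DecidableEq ι]
    (ψ : ι → G →* H) (hψ : ∀ i, IsFHom F (ψ i))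
    (hcomm : Pairwise fun i j => ∀ x y, Commute (ψ i x) (ψ j y)) :
    ∃ φ : (ι → G) →* H, IsFHom F φ ∧
      ∀ i, φ.comp (MonoidHom.mulSingle (fun _ : ι => G) i) = ψ i := by
  have hrestrict : ∀ i, (MonoidHom.noncommPiCoprod ψ hcomm).comp
      (MonoidHom.mulSingle (fun _ : ι => G) i) = ψ i := fun i => by
    ext x
    simp
  refine ⟨_, isFHom_of_comp_mulSingle fun i => ?_, hrestrict⟩
  rw [hrestrict]
  exact hψ i

end FGroupMorphisms

section Restriction

variable {ι G H : Type*} [Finite ι] [DecidableEq ι] [Group G] [Group H]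

theorem MonoidHom.comp_mulSingle_injective :
    Function.Injective fun φ : (ι → G) →* H => fun i => φ.comp (MonoidHom.mulSingle _ i) :=
  fun _ _ h => MonoidHom.pi_ext fun i x => DFunLike.congr_fun (congrFun h i) x

theorem MonoidHom.exists_comp_mulSingle_ne_one {φ : (ι → G) →* H} (hφ : φ ≠ 1) :
    ∃ i, φ.comp (MonoidHom.mulSingle (fun _ : ι => G) i) ≠ 1 := by
  by_contra! h
  exact hφ (MonoidHom.comp_mulSingle_injective (funext fun i => (h i).trans (one_comp _).symm))

end Restriction

theorem MonoidHom.eq_of_surjective_comp_mulSingle {ι G H : Type*} [DecidableEq ι] [Group G]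
    [Group H] (hG : ¬ ∀ a b : G, a * b = b * a) {φ : (ι → H) →* G} {i j : ι}
    (hi : Function.Surjective (φ.comp (MonoidHom.mulSingle _ i)))
    (hj : Function.Surjective (φ.comp (MonoidHom.mulSingle _ j))) : i = j := by
  by_contra hij
  refine hG fun a b => ?_
  obtain ⟨u, rfl⟩ := hi a
  obtain ⟨v, rfl⟩ := hj b
  exact ((Pi.mulSingle_commute hij u v).map φ).eq

theorem hom_pow_to_hom_tuple_general
    {F G : Type*} [Group F] [Group G] [MulDistribMulAction F G] [Finite G]
    (hirr : IsIrreducibleFGroup F G) (m : ℕ) :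
    (∀ φ : (Fin m → G) →* G, IsFHom F φ →
      ∀ i : Fin m, IsFHom F (φ.comp (MonoidHom.mulSingle (fun _ : Fin m => G) i))) ∧
    Function.Injective
      (fun φ : {φ : (Fin m → G) →* G // IsFHom F φ} =>
        fun i : Fin m => φ.1.comp (MonoidHom.mulSingle (fun _ : Fin m => G) i)) ∧
    ((∀ a b : G, a * b = b * a) →
      ∀ ψ : Fin m → (G →* G), (∀ i, IsFHom F (ψ i)) →
        ∃ φ : (Fin m → G) →* G, IsFHom F φ ∧
          ∀ i, φ.comp (MonoidHom.mulSingle (fun _ : Fin m => G) i) = ψ i) ∧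
    ((¬ ∀ a b : G, a * b = b * a) →
      ∀ ψ : Fin m → (G →* G),
        ((∀ i, IsFHom F (ψ i)) ∧ ∀ i i', ψ i ≠ 1 → ψ i' ≠ 1 → i = i') ↔
          ∃ φ : (Fin m → G) →* G, IsFHom F φ ∧
            ∀ i, φ.comp (MonoidHom.mulSingle (fun _ : Fin m => G) i) = ψ i) ∧
    (∀ φ : (Fin m → G) →* G, IsFHom F φ → φ ≠ 1 → Function.Surjective φ) := by
  have restrict : ∀ φ : (Fin m → G) →* G, IsFHom F φ →
      ∀ i, IsFHom F (φ.comp (MonoidHom.mulSingle (fun _ : Fin m => G) i)) :=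
    fun _ hφ i => hφ.comp (isFHom_mulSingle i)
  refine ⟨restrict, MonoidHom.comp_mulSingle_injective.comp Subtype.val_injective, ?_, ?_, ?_⟩
  · intro hab ψ hψ
    exact exists_isFHom_comp_mulSingle_eq ψ hψ fun _ _ _ x y => hab _ _
  · intro hG ψ
    constructor
    · rintro ⟨hψ, hsupp⟩
      refine exists_isFHom_comp_mulSingle_eq ψ hψ fun i j hij x y => ?_
      by_cases hi : ψ i = 1
      · simp [hi]
      · have hj : ψ j = 1 := by_contra fun hj => hij (hsupp i j hi hj)
        simp [hj]
    · rintro ⟨φ, hφ, hrestrict⟩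
      simp only [← hrestrict]
      refine ⟨restrict φ hφ, fun i j hi hj => ?_⟩
      exact MonoidHom.eq_of_surjective_comp_mulSingle hG
        (hirr.surjective_of_ne_one (restrict φ hφ i) hi)
        (hirr.surjective_of_ne_one (restrict φ hφ j) hj)
  · intro φ hφ hne
    obtain ⟨i, hi⟩ := MonoidHom.exists_comp_mulSingle_ne_one hne
    exact Function.Surjective.of_comp (g := Pi.mulSingle i)
      (hirr.surjective_of_ne_one (restrict φ hφ i) hi)

/-- restriction of `F`-group morphisms `G^m → G` to the `m` factors:
the restrictions are `F`-group morphisms; the resulting map `Hom_F(G^m,G) →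
Hom_F(G,G)^m` is injective; it is a bijection when `G` is abelian; when `G` is
non-abelian its image is the set of tuples with at most one nontrivial coordinate;
and every nontrivial element of `Hom_F(G^m, G)` is surjective. -/
theorem hom_pow_to_hom_tuple
    {F G : Type*} [Group F] [Group G] [MulDistribMulAction F G] [Finite G]
    (hirr : IsIrreducibleFGroup F G) (m : ℕ) (hm : 0 < m) :
    (∀ φ : (Fin m → G) →* G, IsFHom F φ →
      ∀ i : Fin m, IsFHom F (φ.comp (MonoidHom.mulSingle (fun _ : Fin m => G) i))) ∧
    Function.Injective
      (fun φ : {φ : (Fin m → G) →* G // IsFHom F φ} =>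
        fun i : Fin m => φ.1.comp (MonoidHom.mulSingle (fun _ : Fin m => G) i)) ∧
    ((∀ a b : G, a * b = b * a) →
      ∀ ψ : Fin m → (G →* G), (∀ i, IsFHom F (ψ i)) →
        ∃ φ : (Fin m → G) →* G, IsFHom F φ ∧
          ∀ i, φ.comp (MonoidHom.mulSingle (fun _ : Fin m => G) i) = ψ i) ∧
    ((¬ ∀ a b : G, a * b = b * a) →
      ∀ ψ : Fin m → (G →* G),
        ((∀ i, IsFHom F (ψ i)) ∧ ∀ i i', ψ i ≠ 1 → ψ i' ≠ 1 → i = i') ↔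
          ∃ φ : (Fin m → G) →* G, IsFHom F φ ∧
            ∀ i, φ.comp (MonoidHom.mulSingle (fun _ : Fin m => G) i) = ψ i) ∧
    (∀ φ : (Fin m → G) →* G, IsFHom F φ → φ ≠ 1 → Function.Surjective φ) :=
  hom_pow_to_hom_tuple_general hirr m
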